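/- Let μ be a U*-invariant Borel probability measure of a contractive Markov system. Then the set function defined on cylinders by M̄(_m[e_m,...,e_n]) = ∫ p_{e_m}(x) p_{e_{m+1}}(w_{e_m}x) ⋯ p_{e_n}(w_{e_{n-1}}∘⋯∘w_{e_m}x) dμ(x) extends uniquely to a shift-invariant Borel probability measure on Σ = E^ℤ; in particular M̄(_m[e_m,...,e_n]) = Σ_{e_{m-1}∈E} M̄(_{m-1}[e_{m-1}, e_m,...,e_n]) for all cylinders. -/

import Mathlib

open MeasureTheory ENNReal Filter

/-- A contractive Markov system on a metric space `K` with vertex type `V` and edge type `E`. -/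
structure CMS (E V K : Type*) [Fintype E] [MetricSpace K] [MeasurableSpace K] where
  i : E → V
  t : E → V
  Ks : V → Set K
  w : E → K → K
  p : E → K → ℝ
  a : ℝ
  ha0 : 0 < a
  ha1 : a < 1
  Ks_nonempty : ∀ v, (Ks v).Nonempty
  Ks_meas : ∀ v, MeasurableSet (Ks v)
  Ks_disj : ∀ v v', v ≠ v' → Disjoint (Ks v) (Ks v')
  Ks_cover : ∀ x : K, ∃ v, x ∈ Ks v
  w_meas : ∀ e, Measurable (w e)
  p_meas : ∀ e, Measurable (p e)
  p_nonneg : ∀ e x, 0 ≤ p e x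
  p_sum : ∀ x : K, ∑ e, p e x = 1
  p_zero : ∀ e, ∀ x ∉ Ks (i e), p e x = 0
  w_maps : ∀ e, Set.MapsTo (w e) (Ks (i e)) (Ks (t e))
  contractive : ∀ v, ∀ x ∈ Ks v, ∀ y ∈ Ks v,
      ∑ e, p e x * dist (w e x) (w e y) ≤ a * dist x y

variable {E V K : Type*} [Fintype E] [MetricSpace K] [MeasurableSpace K]

/-- `S.orbit e m x j = w_{e_{m+j}} ∘ ⋯ ∘ w_{e_m} (x)`. -/
def CMS.orbit (S : CMS E V K) (e : ℤ → E) (m : ℤ) (x : K) : ℕ → K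
  | 0 => S.w (e m) x
  | j + 1 => S.w (e (m + j + 1)) (S.orbit e m x j)

/-- `S.pathProb e m x j = p_{e_m}(x) p_{e_{m+1}}(w_{e_m}x) ⋯ p_{e_{m+j}}(w_{e_{m+j-1}}∘⋯∘w_{e_m}x)`. -/
def CMS.pathProb (S : CMS E V K) (e : ℤ → E) (m : ℤ) (x : K) : ℕ → ℝ
  | 0 => S.p (e m) x
  | j + 1 => S.pathProb e m x j * S.p (e (m + j + 1)) (S.orbit e m x j)

/-- The σ-algebra `𝒜_m` on `Σ = E^ℤ` generated by the coordinates with index `≥ m`. -/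
def Am (E : Type*) (m : ℤ) : MeasurableSpace (ℤ → E) :=
  ⨆ (i : ℤ) (_ : m ≤ i), MeasurableSpace.comap (fun σ => σ i) ⊤

/-- The cylinder `_m[e_m, …, e_{m+j}]`. -/
def cyl (m : ℤ) (j : ℕ) (e : ℤ → E) : Set (ℤ → E) :=
  {σ | ∀ k : ℤ, m ≤ k → k ≤ m + j → σ k = e k}

/-- `P` is the family of Markov measures `P^m_x` on `(Σ, 𝒜_m)` of the CMS `S`. -/
def IsKernel (S : CMS E V K) (P : ∀ m : ℤ, K → @Measure (ℤ → E) (Am E m)) : Prop :=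
  (∀ (m : ℤ) (x : K), @IsProbabilityMeasure _ (Am E m) (P m x)) ∧
  ∀ (m : ℤ) (x : K) (e : ℤ → E) (j : ℕ),
    P m x (cyl m j e) = ENNReal.ofReal (S.pathProb e m x j)

/-- The `m`-th lift `Φ_m(ν)(A) = ∫ P^m_x(A) dν(x)`. -/
noncomputable def liftMeas (P : ∀ m : ℤ, K → @Measure (ℤ → E) (Am E m))
    (m : ℤ) (ν : Measure K) (A : Set (ℤ → E)) : ℝ≥0∞ :=
  ∫⁻ x, P m x A ∂ν

/-- The lift outer measure `Φ(ν)`, via coverings `B ⊆ ⋃_{m ≤ 0} A_m`, `A_m ∈ 𝒜_m` (indexed by `m = -n`). -/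
noncomputable def PhiM (P : ∀ m : ℤ, K → @Measure (ℤ → E) (Am E m))
    (ν : Measure K) (B : Set (ℤ → E)) : ℝ≥0∞ :=
  ⨅ (A : ℕ → Set (ℤ → E)) (_ : ∀ n : ℕ, MeasurableSet[Am E (-(n : ℤ))] (A n))
    (_ : B ⊆ ⋃ n, A n), ∑' n : ℕ, liftMeas P (-(n : ℤ)) ν (A n)

/-- `Y^{x_1…x_N}_{m0}(σ) = w_{σ_0}∘⋯∘w_{σ_m}(x_{i(σ_m)})`. -/
noncomputable def CMS.Y (S : CMS E V K) (xs : V → K) (m : ℤ) (σ : ℤ → E) : K :=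
  S.orbit σ m (xs (S.i (σ m))) (-m).toNat

/-- The uniform measure `(1/N) ∑_i δ_{x_i}`. -/
noncomputable def unif [Fintype V] (xs : V → K) : Measure K :=
  ((Fintype.card V : ℝ≥0∞))⁻¹ • ∑ v : V, Measure.dirac (xs v)

/-- The measure `P^m_{x_1…x_N} = Φ_m((1/N)∑δ_{x_i}) = (1/N)∑_i P^m_{x_i}`. -/
noncomputable def PmMix [Fintype V] (P : ∀ m : ℤ, K → @Measure (ℤ → E) (Am E m))
    (xs : V → K) (m : ℤ) : @Measure (ℤ → E) (Am E m) :=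
  ((Fintype.card V : ℝ≥0∞))⁻¹ • ∑ v : V, P m (xs v)

/-- The product (Borel) σ-algebra on `Σ = E^ℤ`, generated by the cylinders. -/
def sigAll (E : Type*) : MeasurableSpace (ℤ → E) :=
  @MeasurableSpace.pi ℤ (fun _ => E) (fun _ => ⊤)

/-- The left shift on `Σ = E^ℤ`. -/
def shiftMap {E : Type*} (σ : ℤ → E) : ℤ → E := fun n => σ (n + 1)


/-!
The masses `M̄` are consistent: extending a cylinder by one coordinate on the right does not
change its mass because `∑_e p_e = 1`, and extending it on the left does not either because `μ`
is `U*`-invariant. Hence for every `N` the finitely supported measure that puts mass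
`M̄(_{-N}[σ_{-N}, …, σ_N])` on one representative of each word on `[-N, N]` agrees with `M̄` on all
cylinders inside `[-N, N]`, and the images of these measures on finite sets of coordinates form a
projective family. As `E` is finite, `Σ` is compact and measurable cylinders are clopen, so a
countable disjoint cover of a cylinder by cylinders has only finitely many nonempty members: the
induced content is σ-additive and Carathéodory's theorem extends it to `M`. Uniqueness follows
from the π-λ theorem for cylinders, and shift invariance from uniqueness, because shifting a
cylinder does not change its mass.
-/

section Cylinders

variable {ι : Type*} {α : ι → Type*} [∀ i, MeasurableSpace (α i)]

theorem isClopen_of_mem_measurableCylinders [∀ i, TopologicalSpace (α i)]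
    [∀ i, DiscreteTopology (α i)] {s : Set (∀ i, α i)} (hs : s ∈ measurableCylinders α) :
    IsClopen s := by
  obtain ⟨I, S, -, rfl⟩ := (mem_measurableCylinders s).1 hs
  exact (isClopen_discrete S).preimage (continuous_pi fun i => continuous_apply _)

theorem MeasureTheory.AddContent.isSigmaSubadditive_of_finite [∀ i, Finite (α i)]
    (m : AddContent ℝ≥0∞ (measurableCylinders α)) : m.IsSigmaSubadditive := by
  let _ : ∀ i, TopologicalSpace (α i) := fun _ => ⊥
  have _ : ∀ i, DiscreteTopology (α i) := fun _ => ⟨rfl⟩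
  refine isSigmaSubadditive_of_addContent_iUnion_eq_tsum isSetRing_measurableCylinders
    fun f hf hU hdisj => ?_
  obtain ⟨t, ht⟩ := (isClopen_of_mem_measurableCylinders hU).isClosed.isCompact.elim_finite_subcover
    f (fun i => (isClopen_of_mem_measurableCylinders (hf i)).isOpen) subset_rfl
  have hempty : ∀ i ∉ t, f i = ∅ := by
    intro i hi
    refine Set.eq_empty_of_forall_notMem fun x hx => ?_
    obtain ⟨k, hk, hxk⟩ := Set.mem_iUnion₂.1 (ht (Set.mem_iUnion_of_mem i hx))
    exact Set.disjoint_left.1 (hdisj (ne_of_mem_of_not_mem hk hi).symm) hx hxk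
  have hU_eq : ⋃ i, f i = ⋃ i ∈ t, f i :=
    subset_antisymm ht (Set.iUnion₂_subset fun i _ => Set.subset_iUnion f i)
  rw [hU_eq, addContent_biUnion (fun i _ => hf i) (fun i _ j _ hij => hdisj hij) (hU_eq ▸ hU),
    tsum_eq_sum fun i hi => by rw [hempty i hi, addContent_empty]]

theorem map_restrict_eq_of_cylinder_singleton [∀ i, MeasurableSingletonClass (α i)]
    [∀ i, Finite (α i)] {ν ν' : Measure (∀ i, α i)} {I : Finset ι}
    (h : ∀ σ, ν (cylinder I {I.restrict σ}) = ν' (cylinder I {I.restrict σ})) :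
    ν.map I.restrict = ν'.map I.restrict := by
  refine Measure.ext_of_singleton fun g => ?_
  rw [Measure.map_apply (Finset.measurable_restrict I) (measurableSet_singleton g),
    Measure.map_apply (Finset.measurable_restrict I) (measurableSet_singleton g)]
  by_cases hg : ∃ σ, I.restrict σ = g
  · obtain ⟨σ, rfl⟩ := hg
    exact h σ
  · have : I.restrict ⁻¹' {g} = (∅ : Set (∀ i, α i)) :=
      Set.eq_empty_of_forall_notMem fun σ hσ => hg ⟨σ, hσ⟩
    rw [this, measure_empty, measure_empty]

end Cylinders

namespace CMS

variable (S : CMS E V K)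

/-- `U*μ = μ`, tested against nonnegative measurable functions. -/
def IsInvariant (μ : Measure K) : Prop :=
  ∀ g : K → ℝ≥0∞, Measurable g →
    ∫⁻ x, g x ∂μ = ∑ e : E, ∫⁻ x, ENNReal.ofReal (S.p e x) * g (S.w e x) ∂μ

theorem orbit_congr {e e' : ℤ → E} {m : ℤ} (x : K) {j : ℕ}
    (h : Set.EqOn e e' (Set.Icc m (m + j))) : S.orbit e m x j = S.orbit e' m x j := by
  induction j with
  | zero => simp [orbit, h (Set.left_mem_Icc.2 (by simp))]
  | succ j ih =>
    simp only [orbit]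
    rw [ih (h.mono (Set.Icc_subset_Icc_right (by simp))), h ⟨by omega, by push_cast; omega⟩]

theorem pathProb_congr {e e' : ℤ → E} {m : ℤ} (x : K) {j : ℕ}
    (h : Set.EqOn e e' (Set.Icc m (m + j))) : S.pathProb e m x j = S.pathProb e' m x j := by
  induction j with
  | zero => simp [pathProb, h (Set.left_mem_Icc.2 (by simp))]
  | succ j ih =>
    have h' : Set.EqOn e e' (Set.Icc m (m + j)) := h.mono (Set.Icc_subset_Icc_right (by simp))
    simp only [pathProb]
    rw [ih h', S.orbit_congr x h', h ⟨by omega, by push_cast; omega⟩]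

theorem pathProb_nonneg (e : ℤ → E) (m : ℤ) (x : K) (j : ℕ) : 0 ≤ S.pathProb e m x j := by
  induction j with
  | zero => exact S.p_nonneg _ _
  | succ j ih => exact mul_nonneg ih (S.p_nonneg _ _)

theorem measurable_orbit (e : ℤ → E) (m : ℤ) (j : ℕ) : Measurable fun x => S.orbit e m x j := by
  induction j with
  | zero => exact S.w_meas _
  | succ j ih => exact (S.w_meas _).comp ih

theorem measurable_pathProb (e : ℤ → E) (m : ℤ) (j : ℕ) :
    Measurable fun x => S.pathProb e m x j := by
  induction j with
  | zero => exact S.p_meas _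
  | succ j ih => exact ih.mul ((S.p_meas _).comp (S.measurable_orbit e m j))

theorem orbit_succ (e : ℤ → E) (m : ℤ) (x : K) (j : ℕ) :
    S.orbit e m x (j + 1) = S.orbit e (m + 1) (S.w (e m) x) j := by
  induction j with
  | zero => simp [orbit]
  | succ j ih =>
    rw [orbit, ih, orbit]
    congr 2
    push_cast
    ring

theorem pathProb_succ (e : ℤ → E) (m : ℤ) (x : K) (j : ℕ) :
    S.pathProb e m x (j + 1) = S.p (e m) x * S.pathProb e (m + 1) (S.w (e m) x) j := by
  induction j with
  | zero => simp [pathProb, orbit]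
  | succ j ih =>
    rw [pathProb, ih, S.orbit_succ, pathProb, mul_assoc]
    congr 4
    push_cast
    ring

theorem pathProb_comp_sub (e : ℤ → E) (c m : ℤ) (x : K) (j : ℕ) :
    S.pathProb (fun k => e (k - c)) (m + c) x j = S.pathProb e m x j := by
  have horbit : ∀ j : ℕ, S.orbit (fun k => e (k - c)) (m + c) x j = S.orbit e m x j := by
    intro j
    induction j with
    | zero => simp [orbit]
    | succ j ih =>
      rw [orbit, ih, orbit]
      congr 2
      ring
  induction j with
  | zero => simp [pathProb]
  | succ j ih =>
    rw [pathProb, ih, horbit, pathProb]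
    congr 3
    ring

/-- The mass `M̄(_m[e_m, …, e_{m+j}])`. -/
noncomputable def cylMass (μ : Measure K) (m : ℤ) (j : ℕ) (e : ℤ → E) : ℝ≥0∞ :=
  ∫⁻ x, ENNReal.ofReal (S.pathProb e m x j) ∂μ

variable {S} {μ : Measure K}

theorem cylMass_congr {e e' : ℤ → E} {m : ℤ} {j : ℕ} (h : Set.EqOn e e' (Set.Icc m (m + j))) :
    S.cylMass μ m j e = S.cylMass μ m j e' := by
  simp only [cylMass, S.pathProb_congr _ h]

theorem cylMass_comp_sub (e : ℤ → E) (c m : ℤ) (j : ℕ) :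
    S.cylMass μ (m + c) j (fun k => e (k - c)) = S.cylMass μ m j e := by
  simp only [cylMass, pathProb_comp_sub]

theorem cylMass_eq_sum_succ (m : ℤ) (j : ℕ) (e : ℤ → E) :
    S.cylMass μ m j e = ∑ f : E, S.cylMass μ m (j + 1) (Function.update e (m + j + 1) f) := by
  have hterm : ∀ (f : E) (x : K), S.pathProb (Function.update e (m + j + 1) f) m x (j + 1) =
      S.pathProb e m x j * S.p f (S.orbit e m x j) := by
    intro f x
    have hfix : Set.EqOn (Function.update e (m + j + 1) f) e (Set.Icc m (m + j)) :=
      fun k hk => Function.update_of_ne (by grind) _ _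
    rw [pathProb, S.pathProb_congr x hfix, S.orbit_congr x hfix, Function.update_self]
  simp only [cylMass]
  rw [← lintegral_finsetSum _ fun f _ => (S.measurable_pathProb _ m _).ennreal_ofReal]
  refine lintegral_congr fun x => ?_
  rw [← ENNReal.ofReal_sum_of_nonneg fun f _ => S.pathProb_nonneg _ m x _]
  simp only [hterm, ← Finset.mul_sum, S.p_sum, mul_one]

theorem cylMass_eq_sum_pred (hμ : S.IsInvariant μ) (m : ℤ) (j : ℕ) (e : ℤ → E) :
    S.cylMass μ m j e = ∑ f : E, S.cylMass μ (m - 1) (j + 1) (Function.update e (m - 1) f) := by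
  rw [cylMass, hμ _ (S.measurable_pathProb e m j).ennreal_ofReal]
  refine Finset.sum_congr rfl fun f _ => lintegral_congr fun x => ?_
  have hfix : Set.EqOn (Function.update e (m - 1) f) e (Set.Icc (m - 1 + 1) (m - 1 + 1 + j)) :=
    fun k hk => Function.update_of_ne (by grind) _ _
  rw [pathProb_succ, S.pathProb_congr _ hfix, sub_add_cancel, Function.update_self,
    ENNReal.ofReal_mul (S.p_nonneg f x)]

theorem sum_cylMass_const [IsProbabilityMeasure μ] :
    ∑ c : E, S.cylMass μ 0 0 (fun _ => c) = 1 := by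
  simp only [cylMass, pathProb]
  rw [← lintegral_finsetSum _ fun c _ => (S.p_meas c).ennreal_ofReal]
  simp [← ENNReal.ofReal_sum_of_nonneg fun c _ => S.p_nonneg c _, S.p_sum]

end CMS

section SequenceSpace

variable {E : Type*}

theorem cyl_eq_cylinder (m : ℤ) (j : ℕ) (e : ℤ → E) :
    cyl m j e = cylinder (Finset.Icc m (m + j))
      ({(Finset.Icc m (m + j)).restrict e} : Set (Finset.Icc m (m + j) → E)) := by
  ext σ
  simp [cyl, mem_cylinder, funext_iff]

theorem cyl_pred_update (m : ℤ) (j : ℕ) (e : ℤ → E) (f : E) :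
    cyl (m - 1) (j + 1) (Function.update e (m - 1) f) = cyl m j e ∩ {σ | σ (m - 1) = f} := by
  ext σ
  simp only [cyl, Set.mem_inter_iff, Set.mem_ofPred_eq]
  constructor
  · intro h
    refine ⟨fun k hk hkj => ?_, by simpa using h (m - 1) le_rfl (by omega)⟩
    rw [h k (by omega) (by push_cast at hkj ⊢; omega), Function.update_of_ne (by omega)]
  · rintro ⟨h, rfl⟩ k hk hkj
    rcases eq_or_ne k (m - 1) with rfl | hne
    · simp
    · rw [Function.update_of_ne hne, h k (by omega) (by push_cast at hkj ⊢; omega)]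

theorem cyl_succ_update (m : ℤ) (j : ℕ) (e : ℤ → E) (f : E) :
    cyl m (j + 1) (Function.update e (m + j + 1) f) = cyl m j e ∩ {σ | σ (m + j + 1) = f} := by
  ext σ
  simp only [cyl, Set.mem_inter_iff, Set.mem_ofPred_eq]
  constructor
  · intro h
    refine ⟨fun k hk hkj => ?_, by simpa using h (m + j + 1) (by omega) (by push_cast; omega)⟩
    rw [h k hk (by push_cast; omega), Function.update_of_ne (by omega)]
  · rintro ⟨h, rfl⟩ k hk hkj
    rcases eq_or_ne k (m + j + 1) with rfl | hne
    · simp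
    · rw [Function.update_of_ne hne, h k hk (by push_cast at hkj ⊢; omega)]

theorem cyl_zero_zero_const (c : E) : cyl 0 0 (fun _ => c) = {σ : ℤ → E | σ 0 = c} := by
  ext σ
  simp only [cyl, Set.mem_ofPred_eq]
  exact ⟨fun h => h 0 le_rfl (by simp),
    fun h k hk hk' => by rwa [le_antisymm (by simpa using hk') hk]⟩

noncomputable def window (N : ℕ) : Finset ℤ := Finset.Icc (-(N : ℤ)) N

theorem cyl_window (N : ℕ) (e : ℤ → E) :
    cyl (-N) (2 * N) e = cylinder (window N) ({(window N).restrict e} : Set (window N → E)) := by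
  have hN : -(N : ℤ) + ↑(2 * N) = N := by push_cast; ring
  rw [cyl_eq_cylinder, hN, window]

theorem mem_window {N : ℕ} {k : ℤ} : k ∈ window N ↔ -(N : ℤ) ≤ k ∧ k ≤ N := Finset.mem_Icc

theorem subset_window_sup_natAbs (J : Finset ℤ) : J ⊆ window (J.sup Int.natAbs) := by
  intro k hk
  have := Finset.le_sup (f := Int.natAbs) hk
  rw [mem_window]
  omega

theorem preimage_shiftMap_cyl (m : ℤ) (j : ℕ) (e : ℤ → E) :
    shiftMap ⁻¹' cyl m j e = cyl (m + 1) j fun k => e (k - 1) := by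
  ext σ
  simp only [cyl, shiftMap, Set.mem_preimage, Set.mem_ofPred_eq]
  constructor
  · intro h k hk hkj
    simpa using h (k - 1) (by omega) (by omega)
  · intro h k hk hkj
    simpa using h (k + 1) (by omega) (by omega)

noncomputable def windowExtend {N : ℕ} (g : window N → E) : ℤ → E :=
  Function.extend Subtype.val g fun _ => g ⟨0, mem_window.2 (by omega)⟩

theorem windowExtend_apply {N : ℕ} (g : window N → E) (k : window N) : windowExtend g k = g k :=
  Subtype.val_injective.extend_apply g _ k

variable [MeasurableSpace E]

theorem measurable_shiftMap : Measurable (shiftMap : (ℤ → E) → ℤ → E) :=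
  measurable_pi_lambda _ fun n => measurable_pi_apply (n + 1)

variable [MeasurableSingletonClass E]

theorem measurableSet_cyl (m : ℤ) (j : ℕ) (e : ℤ → E) : MeasurableSet (cyl m j e) := by
  rw [cyl_eq_cylinder]
  exact .cylinder _ (measurableSet_singleton _)

variable [Fintype E]

theorem measure_eq_sum_inter_eval (ν : Measure (ℤ → E)) {A : Set (ℤ → E)} (hA : MeasurableSet A)
    (k : ℤ) : ν A = ∑ f : E, ν (A ∩ {σ | σ k = f}) := by
  have hdisj : Pairwise (Function.onFun Disjoint fun f : E => A ∩ {σ | σ k = f}) :=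
    fun f f' hff' => Set.disjoint_left.2 fun σ h h' => hff' (h.2.symm.trans h'.2)
  have hmeas (f : E) : MeasurableSet {σ : ℤ → E | σ k = f} :=
    (measurableSet_singleton f).preimage (measurable_pi_apply k)
  rw [← tsum_fintype (L := .unconditional _),
    ← measure_iUnion hdisj fun f => hA.inter (hmeas f), ← Set.inter_iUnion]
  congr
  ext σ
  simp

end SequenceSpace

namespace CMS

variable [MeasurableSpace E] {S : CMS E V K} {μ : Measure K}

variable (S μ) in
def HasCylMassOn (N : ℕ) (ν : Measure (ℤ → E)) : Prop :=
  ∀ (m : ℤ) (j : ℕ) (e : ℤ → E), -(N : ℤ) ≤ m → m + j ≤ N → ν (cyl m j e) = S.cylMass μ m j e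

theorem HasCylMassOn.mono {N N' : ℕ} {ν : Measure (ℤ → E)} (h : S.HasCylMassOn μ N ν)
    (hN : N' ≤ N) : S.HasCylMassOn μ N' ν :=
  fun m j e hm hmj => h m j e (by omega) (by omega)

variable [MeasurableSingletonClass E]

theorem hasCylMassOn_of_window (hμ : S.IsInvariant μ) {N : ℕ} {ν : Measure (ℤ → E)}
    (hν : ∀ e, ν (cyl (-N) (2 * N) e) = S.cylMass μ (-N) (2 * N) e) : S.HasCylMassOn μ N ν := by
  suffices h : ∀ (d : ℕ) (m : ℤ) (j : ℕ) (e : ℤ → E), -(N : ℤ) ≤ m → m + j ≤ N → j + d = 2 * N →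
      ν (cyl m j e) = S.cylMass μ m j e from
    fun m j e hm hmj => h (2 * N - j) m j e hm hmj (by omega)
  intro d
  induction d with
  | zero =>
    intro m j e hm hmj hd
    obtain rfl : j = 2 * N := hd
    obtain rfl : m = -N := by push_cast at hmj; omega
    exact hν e
  | succ d ih =>
    intro m j e hm hmj hd
    rcases hm.lt_or_eq with hm | rfl
    · rw [measure_eq_sum_inter_eval ν (measurableSet_cyl m j e) (m - 1), cylMass_eq_sum_pred hμ]
      refine Finset.sum_congr rfl fun f _ => ?_
      rw [← cyl_pred_update]
      exact ih _ _ _ (by omega) (by push_cast; omega) (by omega)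
    · rw [measure_eq_sum_inter_eval ν (measurableSet_cyl _ j e) (_ + j + 1), cylMass_eq_sum_succ]
      refine Finset.sum_congr rfl fun f _ => ?_
      rw [← cyl_succ_update]
      exact ih _ _ _ le_rfl (by push_cast; omega) (by omega)

theorem map_restrict_eq_of_hasCylMassOn {N : ℕ} {ν ν' : Measure (ℤ → E)}
    (hν : S.HasCylMassOn μ N ν) (hν' : S.HasCylMassOn μ N ν') {J : Finset ℤ}
    (hJ : J ⊆ window N) : ν.map J.restrict = ν'.map J.restrict := by
  have hW : ν.map (window N).restrict = ν'.map (window N).restrict := by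
    refine map_restrict_eq_of_cylinder_singleton fun σ => ?_
    rw [← cyl_window, hν _ _ _ le_rfl (by push_cast; omega),
      hν' _ _ _ le_rfl (by push_cast; omega)]
  rw [← Finset.restrict₂_comp_restrict hJ,
    ← Measure.map_map (Finset.measurable_restrict₂ hJ) (Finset.measurable_restrict _), hW,
    Measure.map_map (Finset.measurable_restrict₂ hJ) (Finset.measurable_restrict _)]

variable (S μ) in
noncomputable def windowMeasure (N : ℕ) : Measure (ℤ → E) :=
  ∑ g : window N → E, S.cylMass μ (-N) (2 * N) (windowExtend g) • Measure.dirac (windowExtend g)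

theorem windowMeasure_cyl (N : ℕ) (e : ℤ → E) :
    S.windowMeasure μ N (cyl (-N) (2 * N) e) = S.cylMass μ (-N) (2 * N) e := by
  have hmem : ∀ g : window N → E,
      windowExtend g ∈ cyl (-N) (2 * N) e ↔ g = (window N).restrict e := by
    intro g
    rw [cyl_window, mem_cylinder, Set.mem_singleton_iff]
    exact ⟨fun h => funext fun k => (windowExtend_apply g k).symm.trans (congrFun h k),
      fun h => funext fun k => (windowExtend_apply g k).trans (congrFun h k)⟩
  have hext : Set.EqOn (windowExtend ((window N).restrict e)) e (Set.Icc (-N) (-N + ↑(2 * N))) :=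
    fun k hk => windowExtend_apply _ ⟨k, mem_window.2 (by push_cast at hk; grind)⟩
  simp only [windowMeasure, Measure.finsetSum_apply, Measure.smul_apply,
    Measure.dirac_apply' _ (measurableSet_cyl _ _ _), smul_eq_mul]
  rw [Finset.sum_eq_single ((window N).restrict e)]
  · rw [Set.indicator_of_mem ((hmem _).2 rfl), Pi.one_apply, mul_one]
    exact cylMass_congr hext
  · intro g _ hg
    rw [Set.indicator_of_notMem fun h => hg ((hmem g).1 h), mul_zero]
  · simp

theorem hasCylMassOn_windowMeasure (hμ : S.IsInvariant μ) (N : ℕ) :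
    S.HasCylMassOn μ N (S.windowMeasure μ N) :=
  hasCylMassOn_of_window hμ (windowMeasure_cyl N)

variable (S μ) in
noncomputable def marginal (J : Finset ℤ) : Measure (J → E) :=
  (S.windowMeasure μ (J.sup Int.natAbs)).map J.restrict

theorem isProjectiveMeasureFamily_marginal (hμ : S.IsInvariant μ) :
    IsProjectiveMeasureFamily (α := fun _ : ℤ => E) (S.marginal μ) := by
  intro I J hJI
  rw [marginal, marginal, Measure.map_map (Finset.measurable_restrict₂ hJI)
    (Finset.measurable_restrict _), Finset.restrict₂_comp_restrict]
  exact map_restrict_eq_of_hasCylMassOn (hasCylMassOn_windowMeasure hμ _)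
    ((hasCylMassOn_windowMeasure hμ _).mono (Finset.sup_mono hJI)) (subset_window_sup_natAbs J)

theorem exists_measure_cyl (hμ : S.IsInvariant μ) :
    ∃ M : Measure (ℤ → E), ∀ m j e, M (cyl m j e) = S.cylMass μ m j e := by
  let C := projectiveFamilyContent (S.isProjectiveMeasureFamily_marginal hμ)
  refine ⟨C.measure isSetSemiring_measurableCylinders generateFrom_measurableCylinders.symm.le
    C.isSigmaSubadditive_of_finite, fun m j e => ?_⟩
  have hJ := subset_window_sup_natAbs (Finset.Icc m (m + j))
  have hm := mem_window.1 (hJ (Finset.left_mem_Icc.2 (by omega)))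
  have hmj := mem_window.1 (hJ (Finset.right_mem_Icc.2 (by omega)))
  rw [cyl_eq_cylinder, AddContent.measure_eq _ _ generateFrom_measurableCylinders.symm _
      (cylinder_mem_measurableCylinders _ _ (measurableSet_singleton _)),
    projectiveFamilyContent_cylinder _ (measurableSet_singleton _), marginal,
    Measure.map_apply (Finset.measurable_restrict _) (measurableSet_singleton _), ← cylinder,
    ← cyl_eq_cylinder]
  exact hasCylMassOn_windowMeasure hμ _ m j e hm.1 hmj.2

theorem map_shiftMap_cyl {ν : Measure (ℤ → E)} (hν : ∀ m j e, ν (cyl m j e) = S.cylMass μ m j e)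
    (m : ℤ) (j : ℕ) (e : ℤ → E) : ν.map shiftMap (cyl m j e) = S.cylMass μ m j e := by
  rw [Measure.map_apply measurable_shiftMap (measurableSet_cyl m j e), preimage_shiftMap_cyl, hν,
    cylMass_comp_sub]

variable [IsProbabilityMeasure μ]

theorem isProbabilityMeasure_of_cylMass {ν : Measure (ℤ → E)}
    (hν : ∀ m j e, ν (cyl m j e) = S.cylMass μ m j e) : IsProbabilityMeasure ν :=
  ⟨by simp only [measure_eq_sum_inter_eval ν MeasurableSet.univ 0, Set.univ_inter,
    ← cyl_zero_zero_const, hν, S.sum_cylMass_const]⟩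

theorem eq_of_cylMass {ν ν' : Measure (ℤ → E)} (hν : ∀ m j e, ν (cyl m j e) = S.cylMass μ m j e)
    (hν' : ∀ m j e, ν' (cyl m j e) = S.cylMass μ m j e) : ν = ν' := by
  have := S.isProbabilityMeasure_of_cylMass hν
  have := S.isProbabilityMeasure_of_cylMass hν'
  refine ext_of_generate_finite _ generateFrom_measurableCylinders.symm
    isPiSystem_measurableCylinders (fun s hs => ?_) (by simp)
  obtain ⟨J, T, hT, rfl⟩ := (mem_measurableCylinders s).1 hs
  have h := map_restrict_eq_of_hasCylMassOn (N := J.sup Int.natAbs) (fun m j e _ _ => hν m j e)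
    (fun m j e _ _ => hν' m j e) (subset_window_sup_natAbs J)
  rw [cylinder, ← Measure.map_apply (Finset.measurable_restrict J) hT, h,
    Measure.map_apply (Finset.measurable_restrict J) hT]

end CMS

theorem statement12_general {E V K : Type*} [Fintype E] [MetricSpace K]
    [MeasurableSpace K] (S : CMS E V K)
    (μ : Measure K) [IsProbabilityMeasure μ]
    (hinv : ∀ g : K → ℝ≥0∞, Measurable g →
      ∫⁻ x, g x ∂μ = ∑ e : E, ∫⁻ x, ENNReal.ofReal (S.p e x) * g (S.w e x) ∂μ) :
    ∃ M : @Measure (ℤ → E) (sigAll E),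
      @IsProbabilityMeasure _ (sigAll E) M ∧
      (∀ (m : ℤ) (j : ℕ) (e : ℤ → E),
        M (cyl m j e) = ∫⁻ x, ENNReal.ofReal (S.pathProb e m x j) ∂μ) ∧
      @Measure.map (ℤ → E) (ℤ → E) (sigAll E) (sigAll E) shiftMap M = M ∧
      (∀ M' : @Measure (ℤ → E) (sigAll E), @IsProbabilityMeasure _ (sigAll E) M' →
        (∀ (m : ℤ) (j : ℕ) (e : ℤ → E),
          M' (cyl m j e) = ∫⁻ x, ENNReal.ofReal (S.pathProb e m x j) ∂μ) → M' = M) ∧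
      (∀ (m : ℤ) (j : ℕ) (e : ℤ → E),
        (∫⁻ x, ENNReal.ofReal (S.pathProb e m x j) ∂μ) =
          ∑ f : E, ∫⁻ x, ENNReal.ofReal
            (S.pathProb (Function.update e (m - 1) f) (m - 1) x (j + 1)) ∂μ) := by
  let _ : MeasurableSpace E := ⊤
  obtain ⟨M, hM⟩ := S.exists_measure_cyl hinv
  exact ⟨M, S.isProbabilityMeasure_of_cylMass hM, hM, S.eq_of_cylMass (S.map_shiftMap_cyl hM) hM,
    fun M' _ hM' => S.eq_of_cylMass hM' hM, S.cylMass_eq_sum_pred hinv⟩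

/-- if `U*μ = μ`, the set function
`M̄(_m[e_m,…,e_n]) = ∫ p_{e_m}(x)⋯p_{e_n}(w_{e_{n-1}}∘⋯∘w_{e_m}x) dμ(x)` on cylinders
extends uniquely to a shift-invariant Borel probability measure on `Σ`; in particular the
compatibility identity `M̄(_m[e_m,…,e_n]) = ∑_{e_{m-1}} M̄(_{m-1}[e_{m-1},e_m,…,e_n])` holds. -/
theorem statement12 {E V K : Type*} [Fintype E] [MetricSpace K] [CompleteSpace K]
    [MeasurableSpace K] [BorelSpace K] (S : CMS E V K)
    (μ : Measure K) [IsProbabilityMeasure μ]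
    (hinv : ∀ g : K → ℝ≥0∞, Measurable g →
      ∫⁻ x, g x ∂μ = ∑ e : E, ∫⁻ x, ENNReal.ofReal (S.p e x) * g (S.w e x) ∂μ) :
    ∃ M : @Measure (ℤ → E) (sigAll E),
      @IsProbabilityMeasure _ (sigAll E) M ∧
      (∀ (m : ℤ) (j : ℕ) (e : ℤ → E),
        M (cyl m j e) = ∫⁻ x, ENNReal.ofReal (S.pathProb e m x j) ∂μ) ∧
      @Measure.map (ℤ → E) (ℤ → E) (sigAll E) (sigAll E) shiftMap M = M ∧
      (∀ M' : @Measure (ℤ → E) (sigAll E), @IsProbabilityMeasure _ (sigAll E) M' →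
        (∀ (m : ℤ) (j : ℕ) (e : ℤ → E),
          M' (cyl m j e) = ∫⁻ x, ENNReal.ofReal (S.pathProb e m x j) ∂μ) → M' = M) ∧
      (∀ (m : ℤ) (j : ℕ) (e : ℤ → E),
        (∫⁻ x, ENNReal.ofReal (S.pathProb e m x j) ∂μ) =
          ∑ f : E, ∫⁻ x, ENNReal.ofReal
            (S.pathProb (Function.update e (m - 1) f) (m - 1) x (j + 1)) ∂μ) :=
  statement12_general S μ hinv
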